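/- For every ε > 0 and every real k ≠ 0, the polynomial P_k(λ) = −λ³ − (1/ε)λ² − 3k²λ − (5/3)k²/ε has three pairwise distinct complex roots; consequently the matrix L_k is diagonalizable over ℂ. -/

import Mathlib

/-- The Fourier-space generator of the linear three-component Grad system. -/
noncomputable def gradL (ε k : ℝ) : Matrix (Fin 3) (Fin 3) ℂ :=
  !![0, -(5/3) * Complex.I * k, 0;
     -Complex.I * k, 0, -Complex.I * k;
     0, -(4/3) * Complex.I * k, -1/ε]

/-- The characteristic polynomial `P_k(λ)` of the Grad generator. -/
noncomputable def gradP (ε k : ℝ) (l : ℂ) : ℂ :=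
  -l^3 - (1/ε) * l^2 - 3 * k^2 * l - (5/3) * k^2 / ε

theorem grad_three_distinct_roots_diagonalizable
    (ε : ℝ) (hε : 0 < ε) (k : ℝ) (hk : k ≠ 0) :
    (∃ x y z : ℂ, x ≠ y ∧ x ≠ z ∧ y ≠ z ∧
      (∀ l : ℂ, gradP ε k l = 0 ↔ (l = x ∨ l = y ∨ l = z))) ∧
    (∃ Q : Matrix (Fin 3) (Fin 3) ℂ, IsUnit Q.det ∧ (Q⁻¹ * gradL ε k * Q).IsDiag) := by
  have hεC : (ε : ℂ) ≠ 0 := Complex.ofReal_ne_zero.mpr hε.ne'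
  have hkC : (k : ℂ) ≠ 0 := Complex.ofReal_ne_zero.mpr hk
  set C : Cubic ℂ := ⟨-1, -(1/(ε:ℂ)), -(3*(k:ℂ)^2), -((5/3)*(k:ℂ)^2/(ε:ℂ))⟩ with hC
  have ha : C.a ≠ 0 := by simp [hC]
  -- the cubic splits over ℂ
  have hsplit : Polynomial.Splits (C.toPoly.map (RingHom.id ℂ)) :=
    IsAlgClosed.splits _
  obtain ⟨x, y, z, h3⟩ := (Cubic.splits_iff_roots_eq_three ha).mp hsplit
  -- discriminant is nonzero
  have hdisc : C.discr ≠ 0 := by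
    have hrepr : C.discr =
        (((-(1/ε))^2*(-(3*k^2))^2 - 4*(-1)*(-(3*k^2))^3 - 4*(-(1/ε))^3*(-((5/3)*k^2/ε))
          - 27*(-1)^2*(-((5/3)*k^2/ε))^2 + 18*(-1)*(-(1/ε))*(-(3*k^2))*(-((5/3)*k^2/ε)) : ℝ) : ℂ) := by
      simp only [Cubic.discr, hC]
      push_cast
      ring
    rw [hrepr, Complex.ofReal_ne_zero]
    intro h0
    have h4 : (0:ℝ) < ε^4 := by positivity
    have hmul : ((-(1/ε))^2*(-(3*k^2))^2 - 4*(-1)*(-(3*k^2))^3 - 4*(-(1/ε))^3*(-((5/3)*k^2/ε))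
          - 27*(-1)^2*(-((5/3)*k^2/ε))^2 + 18*(-1)*(-(1/ε))*(-(3*k^2))*(-((5/3)*k^2/ε))) * ε^4
        = 24*k^4*ε^2 - 20/3*k^2 - 108*k^6*ε^4 := by
      field_simp
      ring
    rw [h0, zero_mul] at hmul
    have hk2 : (0:ℝ) < k^2 := by positivity
    nlinarith [sq_nonneg (k*(k^2*ε^2 - 1/9))]
  obtain ⟨hxy, hxz, hyz⟩ := (Cubic.discr_ne_zero_iff_roots_ne ha h3).mp hdisc
  -- roots characterization
  have hmapid : Cubic.map (RingHom.id ℂ) C = C := by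
    ext <;> simp [Cubic.map, hC, one_div]
  rw [hmapid] at h3
  have hroots : ∀ l : ℂ, gradP ε k l = 0 ↔ (l = x ∨ l = y ∨ l = z) := by
    intro l
    have h0 : C.toPoly ≠ 0 := Cubic.ne_zero_of_a_ne_zero ha
    have hmem := Cubic.mem_roots_iff h0 l
    rw [h3] at hmem
    have hval : C.a * l ^ 3 + C.b * l ^ 2 + C.c * l + C.d = gradP ε k l := by
      simp only [hC, gradP]; ring
    rw [hval] at hmem
    rw [← hmem]
    constructor
    · intro h; simpa using h
    · intro h; simpa using h
  refine ⟨⟨x, y, z, hxy, hxz, hyz, hroots⟩, ?_⟩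
  -- diagonalization
  have hx : gradP ε k x = 0 := (hroots x).mpr (Or.inl rfl)
  have hy : gradP ε k y = 0 := (hroots y).mpr (Or.inr (Or.inl rfl))
  have hz : gradP ε k z = 0 := (hroots z).mpr (Or.inr (Or.inr rfl))
  simp only [gradP] at hx hy hz
  set a : ℂ := -(5/3) * Complex.I * k with ha'
  set b : ℂ := -Complex.I * k with hb'
  have hb : b ≠ 0 := by
    simp [hb', Complex.I_ne_zero, hkC]
  have haz : a ≠ 0 := by
    simp [ha', Complex.I_ne_zero, hkC]
  set Q : Matrix (Fin 3) (Fin 3) ℂ :=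
    !![a*b, a*b, a*b; b*x, b*y, b*z; x^2 - a*b, y^2 - a*b, z^2 - a*b] with hQ
  have hdet : Q.det = a*b*b * ((y-x) * ((z-x) * (z-y))) := by
    simp [hQ, Matrix.det_fin_three]
    ring
  have hdetne : Q.det ≠ 0 := by
    rw [hdet]
    exact mul_ne_zero (mul_ne_zero (mul_ne_zero haz hb) hb)
      (mul_ne_zero (sub_ne_zero.mpr (Ne.symm hxy))
        (mul_ne_zero (sub_ne_zero.mpr (Ne.symm hxz)) (sub_ne_zero.mpr (Ne.symm hyz))))
  have hunit : IsUnit Q.det := isUnit_iff_ne_zero.mpr hdetne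
  set D : Matrix (Fin 3) (Fin 3) ℂ := !![x,0,0; 0,y,0; 0,0,z] with hD
  have hLQ : gradL ε k * Q = Q * D := by
    ext i j
    fin_cases i <;> fin_cases j <;>
      simp [gradL, hQ, hD, Matrix.mul_apply, Fin.sum_univ_three, Matrix.vecHead, Matrix.vecTail, ha', hb'] <;>
      first
        | ring1
        | linear_combination hx + (3*(k:ℂ)^2*x + (5/3)*(k:ℂ)^2/(ε:ℂ)) * Complex.I_sq
        | linear_combination hy + (3*(k:ℂ)^2*y + (5/3)*(k:ℂ)^2/(ε:ℂ)) * Complex.I_sq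
        | linear_combination hz + (3*(k:ℂ)^2*z + (5/3)*(k:ℂ)^2/(ε:ℂ)) * Complex.I_sq
  refine ⟨Q, hunit, ?_⟩
  have hfinal : Q⁻¹ * gradL ε k * Q = D := by
    rw [Matrix.mul_assoc, hLQ, ← Matrix.mul_assoc, Matrix.nonsing_inv_mul _ hunit, one_mul]
  rw [hfinal]
  intro i j hij
  fin_cases i <;> fin_cases j <;> first | exact absurd rfl hij | rfl
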